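/- Let J : ℝ³ → ℂ³ be essentially bounded with compact support D, let x̂₀ ∈ ℝ³ be a unit vector, let e ∈ ℝ³ be a unit vector with e·x̂₀ = 0, and let K = (k_min, k_max) with 0 < k_min < k_max. Suppose z ∈ ℝ³ and δ > 0 satisfy |x̂₀·(z − y)| ≥ δ for all y ∈ D. Then the phased indicator satisfies the decay bound I_{x̂₀}(z, e) := | ∫_K e · E^∞(x̂₀, k; J) exp(i k x̂₀·z) dk | ≤ (2 k_max √(μ/ε) / δ) · ∫_{ℝ³} |e·J(y)| dy. In particular the indicator decays like the reciprocal of the distance of the sampling point z from the strip S(x̂₀; J). -/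

import Mathlib

open MeasureTheory Complex

noncomputable section

abbrev R3 := EuclideanSpace ℝ (Fin 3)
abbrev C3 := EuclideanSpace ℂ (Fin 3)

/-- The complex component of a ℂ³-vector in a real direction `e`. -/
def dotC (e : R3) (w : C3) : ℂ := ∑ i, (e i : ℂ) * w i

/-- The complexification of a real vector. -/
def cplx (x : R3) : C3 := (WithLp.equiv 2 (Fin 3 → ℂ)).symm fun i => (x i : ℂ)

/-- The electric far field pattern `E^∞(x̂, k; J) = iωμ (v − (x̂·v) x̂)`,
where `ω = k/√(εμ)` and `v = ∫ exp(−ik x̂·y) J(y) dy`. -/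
def farField (ε μ k : ℝ) (J : R3 → C3) (x : R3) : C3 :=
  (Complex.I * ((k / Real.sqrt (ε * μ) : ℝ) : ℂ) * (μ : ℂ)) •
    ((∫ y, Complex.exp (-Complex.I * (k : ℂ) * ((inner ℝ x y : ℝ) : ℂ)) • J y) -
      (dotC x (∫ y, Complex.exp (-Complex.I * (k : ℂ) * ((inner ℝ x y : ℝ) : ℂ)) • J y)) • cplx x)

/-- The phased direct sampling indicator
`I_{x̂₀}(z, e) = |∫_K e·E^∞(x̂₀, k; J) exp(i k x̂₀·z) dk|`. -/
def phasedIndicator (ε μ : ℝ) (J : R3 → C3) (xhat e : R3) (kmin kmax : ℝ) (z : R3) : ℝ :=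
  ‖∫ k in Set.Ioo kmin kmax,
    dotC e (farField ε μ k J xhat) * Complex.exp (Complex.I * k * ((inner ℝ xhat z : ℝ) : ℂ))‖

/-! Since `e ⊥ x̂₀`, the longitudinal part of the far field drops out, and the phased integrand
becomes `i √(μ/ε) ∫ k exp(i k x̂₀·(z - y)) e·J(y) dy`. After exchanging the `k`- and
`y`-integrals, integration by parts bounds `|∫_K k exp(i k a) dk|` by `2 k_max / |a|`, and
`|a| = |x̂₀·(z - y)| ≥ δ` wherever `J` does not vanish. -/

lemma div_sqrt_mul_eq_sqrt_div {ε μ : ℝ} (hε : 0 < ε) (hμ : 0 < μ) : μ / √(ε * μ) = √(μ / ε) := by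
  rw [Real.sqrt_mul hε.le, Real.sqrt_div hμ.le, ← Real.div_sqrt (x := μ)]
  field_simp
  exact Real.sq_sqrt hμ.le

lemma norm_intervalIntegral_mul_exp_le {a k₁ k₂ : ℝ} (ha : a ≠ 0) (hk₁ : 0 ≤ k₁) (hk : k₁ ≤ k₂) :
    ‖∫ k in k₁..k₂, (k : ℂ) * exp (I * k * a)‖ ≤ 2 * k₂ / |a| := by
  set v : ℝ → ℂ := fun t => exp (I * t * a) / (I * a)
  have hv : ∀ t : ℝ, HasDerivAt v (exp (I * t * a)) t := fun t => by
    have := (((hasDerivAt_id' (t : ℂ)).const_mul I).mul_const (a : ℂ)).cexp.comp_ofReal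
    exact (this.div_const (I * a)).congr_deriv (by field_simp [ofReal_ne_zero.2 ha])
  have hv_norm : ∀ t, ‖v t‖ = 1 / |a| := fun t => by
    simp [v, norm_exp]
  rw [intervalIntegral.integral_mul_deriv_eq_deriv_mul (fun t _ => (hasDerivAt_id' t).ofReal_comp)
    (fun t _ => hv t) intervalIntegrable_const
    ((by fun_prop : Continuous _).intervalIntegrable _ _)]
  calc _ ≤ ‖(k₂ : ℂ) * v k₂‖ + ‖(k₁ : ℂ) * v k₁‖ + ‖∫ t in k₁..k₂, (1 : ℂ) * v t‖ :=
        (norm_sub_le _ _).trans (add_le_add_left (norm_sub_le _ _) _)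
    _ ≤ k₂ * (1 / |a|) + k₁ * (1 / |a|) + (1 / |a|) * |k₂ - k₁| := by
        gcongr
        · simp [hv_norm, abs_of_nonneg (hk₁.trans hk)]
        · simp [hv_norm, abs_of_nonneg hk₁]
        · exact intervalIntegral.norm_integral_le_of_norm_le_const fun t _ => by simp [hv_norm]
    _ = 2 * k₂ / |a| := by rw [abs_of_nonneg (sub_nonneg.2 hk)]; ring

lemma norm_setIntegral_Ioo_integral_mul_exp_le {α : Type*} [MeasurableSpace α] {ν : Measure α}
    [SFinite ν] {g : α → ℂ} (hg : Integrable g ν) {φ : α → ℝ} (hφ : Measurable φ)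
    {δ k₁ k₂ : ℝ} (hδ : 0 < δ) (hk₁ : 0 ≤ k₁) (hk : k₁ ≤ k₂)
    (hfar : ∀ y ∈ Function.support g, δ ≤ |φ y|) :
    ‖∫ k in Set.Ioo k₁ k₂, ∫ y, (k : ℂ) * exp (I * k * φ y) * g y ∂ν‖ ≤
      2 * k₂ / δ * ∫ y, ‖g y‖ ∂ν := by
  have hF : Integrable (Function.uncurry fun (k : ℝ) y => (k : ℂ) * exp (I * k * φ y) * g y)
      ((volume.restrict (Set.Ioo k₁ k₂)).prod ν) := by
    have hk_int : Integrable (fun k : ℝ => |k|) (volume.restrict (Set.Ioo k₁ k₂)) :=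
      (continuous_abs.integrableOn_Icc).mono_set Set.Ioo_subset_Icc_self
    refine (hk_int.mul_prod hg.norm).mono' ?_ (ae_of_all _ fun p => ?_)
    · have : Measurable fun p : ℝ × α => (p.1 : ℂ) * exp (I * p.1 * φ p.2) := by fun_prop
      exact this.aestronglyMeasurable.mul hg.aestronglyMeasurable.comp_snd
    · simp [Function.uncurry, norm_exp]
  have hpoint : ∀ y, ‖∫ k in Set.Ioo k₁ k₂, (k : ℂ) * exp (I * k * φ y) * g y‖ ≤
      2 * k₂ / δ * ‖g y‖ := fun y => by
    by_cases hy : g y = 0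
    · simp [hy]
    have hδy := hfar y hy
    rw [integral_mul_const, norm_mul, ← integral_Ioc_eq_integral_Ioo,
      ← intervalIntegral.integral_of_le hk]
    gcongr
    calc _ ≤ 2 * k₂ / |φ y| :=
          norm_intervalIntegral_mul_exp_le (abs_pos.1 (hδ.trans_le hδy)) hk₁ hk
      _ ≤ 2 * k₂ / δ := by gcongr; linarith
  rw [integral_integral_swap hF]
  calc _ ≤ ∫ y, 2 * k₂ / δ * ‖g y‖ ∂ν := norm_integral_le_of_norm_le (hg.norm.const_mul _)
        (ae_of_all _ hpoint)
    _ = _ := integral_const_mul _ _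

lemma dotC_eq_inner (e : R3) (w : C3) : dotC e w = inner ℂ (cplx e) w := by
  simp [dotC, cplx, PiLp.inner_apply, mul_comm]

lemma dotC_cplx (e x : R3) : dotC e (cplx x) = (inner ℝ e x : ℝ) := by
  simp [dotC, cplx, PiLp.inner_apply, mul_comm]

lemma dotC_smul (e : R3) (c : ℂ) (w : C3) : dotC e (c • w) = c * dotC e w := by
  simp [dotC_eq_inner]

lemma dotC_sub (e : R3) (u w : C3) : dotC e (u - w) = dotC e u - dotC e w := by
  simp [dotC_eq_inner]

lemma dotC_integral {J : R3 → C3} (hJ : Integrable J) (e : R3) :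
    dotC e (∫ y, J y) = ∫ y, dotC e (J y) := by
  simp only [dotC_eq_inner, integral_inner hJ]

lemma MeasureTheory.Integrable.dotC {J : R3 → C3} (hJ : Integrable J) (e : R3) :
    Integrable fun y => dotC e (J y) := by
  simpa [dotC_eq_inner] using (innerSL ℂ (cplx e)).integrable_comp hJ

lemma dotC_farField {J : R3 → C3} (hJ : Integrable J) {e x : R3} (hex : inner ℝ e x = 0)
    (ε μ k : ℝ) :
    dotC e (farField ε μ k J x) = I * ((k / √(ε * μ) : ℝ) : ℂ) * μ *
      ∫ y, exp (-I * k * (inner ℝ x y : ℝ)) * dotC e (J y) := by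
  have hint : Integrable (fun y => exp (-I * k * (inner ℝ x y : ℝ)) • J y) :=
    hJ.bdd_smul (φ := fun y => exp (-I * k * (inner ℝ x y : ℝ))) 1
      (by fun_prop : Continuous _).aestronglyMeasurable (ae_of_all _ fun y => by simp [norm_exp])
  rw [farField, dotC_smul, dotC_sub, dotC_smul, dotC_cplx, hex, ofReal_zero, mul_zero, sub_zero,
    dotC_integral hint]
  simp only [dotC_smul]

lemma dotC_farField_mul_exp {J : R3 → C3} (hJ : Integrable J) {e x : R3} (hex : inner ℝ e x = 0)
    (ε μ k : ℝ) (z : R3) :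
    dotC e (farField ε μ k J x) * exp (I * k * (inner ℝ x z : ℝ)) = I * ((μ / √(ε * μ) : ℝ) : ℂ) *
      ∫ y, (k : ℂ) * exp (I * k * (inner ℝ x (z - y) : ℝ)) * dotC e (J y) := by
  rw [dotC_farField hJ hex, mul_assoc, ← integral_mul_const, ← integral_const_mul,
    ← integral_const_mul]
  congr 1 with y
  rw [inner_sub_right, ofReal_sub, mul_sub, sub_eq_add_neg, exp_add]
  push_cast
  ring_nf

theorem phasedIndicator_decay_general (ε μ : ℝ) (hε : 0 < ε) (hμ : 0 < μ)
    (J : R3 → C3) (hJb : MemLp J ⊤ volume) (hJc : HasCompactSupport J)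
    (xhat : R3)
    (e : R3) (hex : (inner ℝ e xhat : ℝ) = 0)
    (kmin kmax : ℝ) (hkmin : 0 < kmin) (hkk : kmin < kmax)
    (z : R3) (δ : ℝ) (hδ : 0 < δ)
    (hfar : ∀ y ∈ tsupport J, δ ≤ |(inner ℝ xhat (z - y) : ℝ)|) :
    phasedIndicator ε μ J xhat e kmin kmax z ≤
      (2 * kmax * Real.sqrt (μ / ε) / δ) * ∫ y, ‖dotC e (J y)‖ := by
  have hJ : Integrable J :=
    (integrableOn_iff_integrable_of_support_subset (subset_tsupport J)).1
      ((hJb.locallyIntegrable le_top).integrableOn_isCompact hJc)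
  have hfar_dotC : ∀ y ∈ Function.support fun y => dotC e (J y), δ ≤ |inner ℝ xhat (z - y)| :=
    fun y hy => hfar y <| subset_tsupport J fun hJy => hy (by simp [hJy, dotC])
  have hcoef : ‖I * ((μ / √(ε * μ) : ℝ) : ℂ)‖ = √(μ / ε) := by
    rw [norm_mul, norm_I, one_mul, norm_real, div_sqrt_mul_eq_sqrt_div hε hμ, Real.norm_eq_abs,
      abs_of_nonneg (Real.sqrt_nonneg _)]
  calc phasedIndicator ε μ J xhat e kmin kmax z
      = √(μ / ε) * ‖∫ k in Set.Ioo kmin kmax, ∫ y,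
          (k : ℂ) * exp (I * k * (inner ℝ xhat (z - y) : ℝ)) * dotC e (J y)‖ := by
        simp only [phasedIndicator, dotC_farField_mul_exp hJ hex]
        rw [integral_const_mul, norm_mul, hcoef]
    _ ≤ √(μ / ε) * (2 * kmax / δ * ∫ y, ‖dotC e (J y)‖) := by
        gcongr
        exact norm_setIntegral_Ioo_integral_mul_exp_le (hJ.dotC e) (by fun_prop) hδ hkmin.le
          hkk.le hfar_dotC
    _ = 2 * kmax * √(μ / ε) / δ * ∫ y, ‖dotC e (J y)‖ := by ring

/-- Decay of the phased indicator: if the sampling point `z` is at distance at least `δ`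
from the strip `S(x̂₀; J)` in the direction `x̂₀`, then
`I_{x̂₀}(z, e) ≤ (2 k_max √(μ/ε) / δ) ∫ |e·J|`. -/
theorem phasedIndicator_decay (ε μ : ℝ) (hε : 0 < ε) (hμ : 0 < μ)
    (J : R3 → C3) (hJb : MemLp J ⊤ volume) (hJc : HasCompactSupport J)
    (xhat : R3) (hxh : ‖xhat‖ = 1)
    (e : R3) (he : ‖e‖ = 1) (hex : (inner ℝ e xhat : ℝ) = 0)
    (kmin kmax : ℝ) (hkmin : 0 < kmin) (hkk : kmin < kmax)
    (z : R3) (δ : ℝ) (hδ : 0 < δ)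
    (hfar : ∀ y ∈ tsupport J, δ ≤ |(inner ℝ xhat (z - y) : ℝ)|) :
    phasedIndicator ε μ J xhat e kmin kmax z ≤
      (2 * kmax * Real.sqrt (μ / ε) / δ) * ∫ y, ‖dotC e (J y)‖ :=
  phasedIndicator_decay_general ε μ hε hμ J hJb hJc xhat e hex kmin kmax hkmin hkk z δ hδ hfar

end
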